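/- arXiv:2002.02715 — 5 statements merged into one kernel-verified Lean document; each statement's English description precedes it below -/
import Mathlib

section
/- Let p and q be unit quaternions and let r ≥ 0. Then the maximal displacement over the ball of radius r of the rotation associated with the quaternion p·(star q) equals 2·sin(ρ(p,q))·r; formally, sSup { ‖(p * star q) * v * star (p * star q) − v‖ : v a pure quaternion with ‖v‖ ≤ r } = 2 · Real.sin (Real.arccos |(p * star q).re|) · r, where (p * star q).re equals the Euclidean inner product ⟪p,q⟫ of p and q viewed as vectors in ℝ⁴. -/
/-!
Write `u = p * star q`. Since the real part of `u` is central and `u * star u = 1`,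
`u v ū - v = (u.im v - v u.im) ū`, so the displacement of `v` is the norm of the commutator
`[u.im, v]`, at most `2 ‖u.im‖ ‖v‖`. Pure quaternions that are orthogonal anticommute, so the
bound is attained at any pure `v` of norm `r` orthogonal to `u.im`. Finally
`‖u.im‖ = √(1 - u.re²) = sin (arccos |u.re|)`.
-/

open Quaternion

lemma norm_mul_sub_mul_swap_le {R : Type*} [NonUnitalSeminormedRing R] (a b : R) :
    ‖a * b - b * a‖ ≤ 2 * ‖a‖ * ‖b‖ :=
  calc ‖a * b - b * a‖ ≤ ‖a * b‖ + ‖b * a‖ := norm_sub_le _ _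
    _ ≤ ‖a‖ * ‖b‖ + ‖b‖ * ‖a‖ := add_le_add (norm_mul_le _ _) (norm_mul_le _ _)
    _ = 2 * ‖a‖ * ‖b‖ := by ring

namespace Quaternion

lemma sq_re_add_sq_norm_im (u : ℍ[ℝ]) : u.re ^ 2 + ‖u.im‖ ^ 2 = ‖u‖ ^ 2 := by
  simp only [sq, ← normSq_eq_norm_mul_self, normSq_def']
  simp only [re_im, imI_im, imJ_im, imK_im]
  ring

lemma sin_arccos_abs_re {u : ℍ[ℝ]} (hu : ‖u‖ = 1) :
    Real.sin (Real.arccos |u.re|) = ‖u.im‖ := by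
  have h := sq_re_add_sq_norm_im u
  rw [hu, one_pow] at h
  rw [Real.sin_arccos, sq_abs, show 1 - u.re ^ 2 = ‖u.im‖ ^ 2 by linarith,
    Real.sqrt_sq (norm_nonneg _)]

lemma mul_sub_mul_swap_im (u v : ℍ[ℝ]) : u.im * v - v * u.im = u * v - v * u := by
  conv_rhs => rw [← re_add_im u, add_mul, mul_add, coe_commutes]
  abel

lemma mul_mul_star_sub_self {u : ℍ[ℝ]} (hu : ‖u‖ = 1) (v : ℍ[ℝ]) :
    u * v * star u - v = (u.im * v - v * u.im) * star u := by
  rw [mul_sub_mul_swap_im, sub_mul, mul_assoc v, self_mul_star, normSq_eq_norm_mul_self, hu,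
    mul_one, coe_one, mul_one]

lemma norm_mul_mul_star_sub_self {u : ℍ[ℝ]} (hu : ‖u‖ = 1) (v : ℍ[ℝ]) :
    ‖u * v * star u - v‖ = ‖u.im * v - v * u.im‖ := by
  rw [mul_mul_star_sub_self hu, norm_mul, norm_star, hu, mul_one]

lemma mul_add_mul_swap_of_re_eq_zero {w v : ℍ[ℝ]} (hw : w.re = 0) (hv : v.re = 0) :
    w * v + v * w = ((-2 * inner ℝ w v : ℝ) : ℍ[ℝ]) := by
  rw [inner_def]
  ext <;> simp only [re_add, imI_add, imJ_add, imK_add, re_mul, imI_mul, imJ_mul, imK_mul, re_star,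
    imI_star, imJ_star, imK_star, re_coe, imI_coe, imJ_coe, imK_coe, hw, hv] <;> ring

lemma norm_mul_sub_mul_swap_of_inner_eq_zero {w v : ℍ[ℝ]} (hw : w.re = 0) (hv : v.re = 0)
    (hwv : inner ℝ w v = 0) : ‖w * v - v * w‖ = 2 * ‖w‖ * ‖v‖ := by
  have hanti : v * w = -(w * v) := by
    rw [eq_neg_iff_add_eq_zero, add_comm, mul_add_mul_swap_of_re_eq_zero hw hv, hwv, mul_zero,
      coe_zero]
  rw [hanti, sub_neg_eq_add, ← two_smul ℝ (w * v), norm_smul, norm_mul, Real.norm_two, mul_assoc]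

lemma inner_one_left (x : ℍ[ℝ]) : inner ℝ (1 : ℍ[ℝ]) x = x.re := by
  simp [inner_def]

lemma exists_re_eq_zero_inner_eq_zero_norm_eq (w : ℍ[ℝ]) {r : ℝ} (hr : 0 ≤ r) :
    ∃ v : ℍ[ℝ], v.re = 0 ∧ inner ℝ w v = 0 ∧ ‖v‖ = r := by
  classical
  set K : Submodule ℝ ℍ[ℝ] := Submodule.span ℝ {1, w}
  have hK : Module.finrank ℝ K ≤ 2 :=
    (finrank_span_le_card ({1, w} : Set ℍ[ℝ])).trans (by simpa using Finset.card_le_two)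
  have hKperp : Kᗮ ≠ ⊥ := by
    have := K.finrank_add_finrank_orthogonal
    rw [finrank_eq_four] at this
    rw [Ne, ← Submodule.finrank_eq_zero]
    omega
  obtain ⟨x, hxK, hx0⟩ := Submodule.exists_mem_ne_zero_of_ne_bot hKperp
  have hx : ‖x‖ ≠ 0 := norm_ne_zero_iff.2 hx0
  refine ⟨(r / ‖x‖) • x, ?_, ?_, ?_⟩
  · rw [re_smul, ← inner_one_left,
      K.inner_right_of_mem_orthogonal (Submodule.subset_span (by simp)) hxK, smul_zero]
  · rw [inner_smul_right, K.inner_right_of_mem_orthogonal (Submodule.subset_span (by simp)) hxK,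
      mul_zero]
  · rw [norm_smul, Real.norm_of_nonneg (by positivity), div_mul_cancel₀ _ hx]

theorem isGreatest_norm_mul_sub_mul_swap {w : ℍ[ℝ]} (hw : w.re = 0) {r : ℝ} (hr : 0 ≤ r) :
    IsGreatest { x : ℝ | ∃ v : ℍ[ℝ], v.re = 0 ∧ ‖v‖ ≤ r ∧ x = ‖w * v - v * w‖ }
      (2 * ‖w‖ * r) := by
  refine ⟨?_, ?_⟩
  · obtain ⟨v, hv, hwv, hvr⟩ := exists_re_eq_zero_inner_eq_zero_norm_eq w hr
    exact ⟨v, hv, hvr.le, by rw [norm_mul_sub_mul_swap_of_inner_eq_zero hw hv hwv, hvr]⟩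
  · rintro x ⟨v, -, hvr, rfl⟩
    exact (norm_mul_sub_mul_swap_le w v).trans (by gcongr)

end Quaternion

/-- Proposition 1 (displacement–norm): for unit quaternions `p`, `q` and radius `r ≥ 0`,
the maximal displacement of the rotation associated to `p * star q` over the ball of
radius `r` equals `2 * sin (arccos |(p * star q).re|) * r`. -/
theorem displacement_eq_two_sin_angular_dist
    (p q : Quaternion ℝ) (hp : ‖p‖ = 1) (hq : ‖q‖ = 1) (r : ℝ) (hr : 0 ≤ r) :
    sSup { x : ℝ | ∃ v : Quaternion ℝ, v.re = 0 ∧ ‖v‖ ≤ r ∧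
        x = ‖(p * star q) * v * star (p * star q) - v‖ } =
      2 * Real.sin (Real.arccos |(p * star q).re|) * r := by
  have hu : ‖p * star q‖ = 1 := by rw [norm_mul, norm_star, hp, hq, one_mul]
  simp_rw [norm_mul_mul_star_sub_self hu, sin_arccos_abs_re hu]
  exact (isGreatest_norm_mul_sub_mul_swap (re_im _) hr).csSup_eq
end

section
/- For every unit quaternion q and every pure quaternion v, ‖q * v * (star q) − v‖ ≤ 2 · ‖Im q‖ · ‖v‖, where Im q denotes the imaginary part of q (the quaternion with real part 0 and the same i, j, k components as q). -/
/-- For every unit quaternion `q` and pure quaternion `v`, the displacement of the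
rotation `R_q` at `v` is at most `2 * ‖Im q‖ * ‖v‖`. -/
theorem displacement_le_two_norm_im_mul_norm
    (q : Quaternion ℝ) (hq : ‖q‖ = 1) (v : Quaternion ℝ) (hv : v.re = 0) :
    ‖q * v * star q - v‖ ≤ 2 * ‖q.im‖ * ‖v‖ := by
  have hns : q * star q = 1 := by
    rw [Quaternion.self_mul_star]
    have : Quaternion.normSq q = 1 := by
      rw [Quaternion.normSq_eq_norm_mul_self, hq, mul_one]
    rw [this]; simp
  have h1 : q * v * star q - v = (q * v - v * q) * star q := by
    rw [sub_mul, mul_assoc v q (star q), hns, mul_one]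
  have h2 : q * v - v * q = q.im * v - v * q.im := by
    nth_rewrite 1 2 [← Quaternion.re_add_im q]
    rw [add_mul, mul_add, Quaternion.coe_mul_eq_smul, Quaternion.mul_coe_eq_smul]
    abel
  rw [h1, norm_mul, norm_star, hq, mul_one, h2]
  calc ‖q.im * v - v * q.im‖ ≤ ‖q.im * v‖ + ‖v * q.im‖ := norm_sub_le _ _
    _ = 2 * ‖q.im‖ * ‖v‖ := by rw [norm_mul, norm_mul]; ring
end

section
/- Let q be a unit quaternion with Im q ≠ 0 and let v be a pure quaternion. Then ‖q * v * (star q) − v‖ = 2 · ‖Im q‖ · ‖v − (⟪v, Im q⟫ / ‖Im q‖²) • Im q‖; that is, the displacement of the rotation R_q at v equals 2 sin(θ_q/2) times the distance from v to the rotation axis spanned by Im q. -/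
/-!
Right multiplication by the unit `q` turns the displacement `q v q⋆ - v` into the commutator
`q v - v q = u v - v u`, where `u = Im q`. Replacing `v` by its component `w` orthogonal to the
axis does not change this commutator, and orthogonal pure quaternions anticommute, so it equals
`2 u w`, of norm `2 ‖u‖ ‖w‖`.
-/

open Quaternion

namespace Quaternion

theorem mul_sub_mul_eq_im_mul_sub_mul_im {R : Type*} [CommRing R] (q v : ℍ[R]) :
    q * v - v * q = q.im * v - v * q.im := by
  conv_lhs => rw [← re_add_im q]
  rw [add_mul, mul_add, coe_commutes]
  abel

theorem norm_mul_mul_star_sub_eq_norm_mul_sub_mul {q : ℍ} (hq : ‖q‖ = 1) (v : ℍ) :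
    ‖q * v * star q - v‖ = ‖q * v - v * q‖ := by
  have hunit : star q * q = 1 := by
    rw [star_mul_self, normSq_eq_norm_mul_self, hq, mul_one, coe_one]
  calc ‖q * v * star q - v‖ = ‖(q * v * star q - v) * q‖ := by rw [norm_mul, hq, mul_one]
    _ = ‖q * v - v * q‖ := by rw [sub_mul, mul_assoc, hunit, mul_one]

theorem mul_eq_neg_mul_of_re_eq_zero_of_inner_eq_zero {u w : ℍ} (hu : u.re = 0) (hw : w.re = 0)
    (huw : inner ℝ u w = 0) : w * u = -(u * w) := by
  rw [inner_def] at huw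
  simp only [re_mul, re_star, imI_star, imJ_star, imK_star, hu, hw] at huw
  ext <;> simp only [re_mul, imI_mul, imJ_mul, imK_mul, re_neg, imI_neg, imJ_neg, imK_neg, hu, hw]
    <;> linarith

end Quaternion

theorem real_inner_sub_div_norm_sq_smul_self {E : Type*} [NormedAddCommGroup E]
    [InnerProductSpace ℝ E] (v u : E) :
    inner ℝ (v - (inner ℝ v u / ‖u‖ ^ 2) • u) u = 0 := by
  rw [inner_sub_left, real_inner_smul_left, real_inner_self_eq_norm_sq,
    div_mul_cancel_of_imp fun h => by simp_all, sub_self]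

theorem displacement_eq_two_norm_im_mul_dist_axis_general
    (q : Quaternion ℝ) (hq : ‖q‖ = 1)
    (v : Quaternion ℝ) (hv : v.re = 0) :
    ‖q * v * star q - v‖ =
      2 * ‖q.im‖ * ‖v - ((inner ℝ v q.im : ℝ) / ‖q.im‖ ^ 2) • q.im‖ := by
  set u := q.im
  set w := v - (inner ℝ v u / ‖u‖ ^ 2) • u
  have hu : u.re = 0 := re_im q
  have hw : w.re = 0 := by simp [w, hv, hu]
  have hanti : w * u = -(u * w) :=
    mul_eq_neg_mul_of_re_eq_zero_of_inner_eq_zero hu hw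
      (by rw [real_inner_comm]; exact real_inner_sub_div_norm_sq_smul_self v u)
  have hcomm : u * v - v * u = u * w - w * u := by
    simp only [w, mul_sub, sub_mul, mul_smul_comm, smul_mul_assoc]
    abel
  calc ‖q * v * star q - v‖ = ‖u * v - v * u‖ := by
        rw [norm_mul_mul_star_sub_eq_norm_mul_sub_mul hq, mul_sub_mul_eq_im_mul_sub_mul_im]
    _ = ‖(2 : ℝ) • (u * w)‖ := by rw [hcomm, hanti, sub_neg_eq_add, two_smul]
    _ = 2 * ‖u‖ * ‖w‖ := by rw [norm_smul, norm_mul, Real.norm_two, mul_assoc]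

/-- For a unit quaternion `q` with `Im q ≠ 0` and a pure quaternion `v`, the displacement
of the rotation `R_q` at `v` equals `2‖Im q‖` times the distance from `v` to the rotation
axis spanned by `Im q`. -/
theorem displacement_eq_two_norm_im_mul_dist_axis
    (q : Quaternion ℝ) (hq : ‖q‖ = 1) (him : q.im ≠ 0)
    (v : Quaternion ℝ) (hv : v.re = 0) :
    ‖q * v * star q - v‖ =
      2 * ‖q.im‖ * ‖v - ((inner ℝ v q.im : ℝ) / ‖q.im‖ ^ 2) • q.im‖ :=
  displacement_eq_two_norm_im_mul_dist_axis_general q hq v hv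
end

section
/- Let E be a metric space, O ⊆ E, let f : E ≃ᵢ E be an isometric equivalence, and let ε > 0 be such that dist (f p) p < ε for every p ∈ O. Then the ε-core of O is contained in the image of O under f: { p ∈ O | ε ≤ Metric.infDist p Oᶜ } ⊆ f '' O. -/
/-- If an isometric equivalence `f` displaces every point of `O` by less than `ε`, then
the `ε`-core of `O` is contained in `f '' O`. -/
theorem epsCore_subset_image_of_displacement_lt
    {E : Type*} [MetricSpace E] (O : Set E) (f : E ≃ᵢ E) (ε : ℝ) (hε : 0 < ε)
    (hdisp : ∀ p ∈ O, dist (f p) p < ε) :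
    { p | p ∈ O ∧ ε ≤ Metric.infDist p Oᶜ } ⊆ f '' O := by
  rintro p ⟨hpO, hcore⟩
  by_cases h : f.symm p ∈ O
  · exact ⟨f.symm p, h, f.apply_symm_apply p⟩
  · exfalso
    have h1 : Metric.infDist p Oᶜ ≤ dist p (f.symm p) :=
      Metric.infDist_le_dist_of_mem h
    have h2 : dist p (f.symm p) = dist (f p) p := by
      calc dist p (f.symm p) = dist (f.symm (f p)) (f.symm p) := by rw [f.symm_apply_apply]
        _ = dist (f p) p := f.symm.isometry.dist_eq _ _
    have := hdisp p hpO
    linarith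
end

section
/- Let r > 0 and 0 < ε ≤ 2r, and let S be a set of unit quaternions such that for every unit quaternion p there exists s ∈ S with arccos |(p * star s).re| < arcsin (ε / (2r)). Then for every unit quaternion p there exists s ∈ S with 2 · ‖Im (p * star s)‖ · r < ε; that is, every orientation is within displacement less than ε of some sample in S. -/
open Real

namespace Quaternion

theorem sq_norm_im (q : ℍ[ℝ]) : ‖q.im‖ ^ 2 = ‖q‖ ^ 2 - q.re ^ 2 := by
  simp only [sq, ← normSq_eq_norm_mul_self, normSq_def', re_im, imI_im, imJ_im, imK_im]
  ring

theorem norm_im_eq_sin_arccos_abs_re {q : ℍ[ℝ]} (hq : ‖q‖ = 1) :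
    ‖q.im‖ = sin (arccos |q.re|) := by
  rw [sin_arccos, sq_abs, ← sqrt_sq (norm_nonneg q.im), sq_norm_im, hq, one_pow]

theorem norm_im_lt_of_arccos_lt_arcsin {q : ℍ[ℝ]} (hq : ‖q‖ = 1) {t : ℝ}
    (h : arccos |q.re| < arcsin t) : ‖q.im‖ < t := by
  rw [norm_im_eq_sin_arccos_abs_re hq]
  refine (lt_arcsin_iff_sin_lt' ⟨?_, h.trans_le (arcsin_le_pi_div_two t)⟩).1 h
  linarith [arccos_nonneg |q.re|, pi_pos]

end Quaternion

theorem displacement_lt_of_dispersion_lt_arcsin_general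
    (r ε : ℝ) (hr : 0 < r)
    (S : Set (Quaternion ℝ)) (hS : ∀ s ∈ S, ‖s‖ = 1)
    (hdisp : ∀ p : Quaternion ℝ, ‖p‖ = 1 →
      ∃ s ∈ S, Real.arccos |(p * star s).re| < Real.arcsin (ε / (2 * r))) :
    ∀ p : Quaternion ℝ, ‖p‖ = 1 → ∃ s ∈ S, 2 * ‖(p * star s).im‖ * r < ε := by
  intro p hp
  obtain ⟨s, hs, hlt⟩ := hdisp p hp
  have hunit : ‖p * star s‖ = 1 := by rw [norm_mul, norm_star, hp, hS s hs, one_mul]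
  have him := Quaternion.norm_im_lt_of_arccos_lt_arcsin hunit hlt
  refine ⟨s, hs, ?_⟩
  rw [lt_div_iff₀ (by positivity)] at him
  linarith

/-- If a set `S` of unit quaternions has dispersion smaller than `arcsin (ε / (2r))`,
then every orientation is within displacement less than `ε` of some sample in `S`. -/
theorem displacement_lt_of_dispersion_lt_arcsin
    (r ε : ℝ) (hr : 0 < r) (hε : 0 < ε) (hεr : ε ≤ 2 * r)
    (S : Set (Quaternion ℝ)) (hS : ∀ s ∈ S, ‖s‖ = 1)
    (hdisp : ∀ p : Quaternion ℝ, ‖p‖ = 1 →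
      ∃ s ∈ S, Real.arccos |(p * star s).re| < Real.arcsin (ε / (2 * r))) :
    ∀ p : Quaternion ℝ, ‖p‖ = 1 → ∃ s ∈ S, 2 * ‖(p * star s).im‖ * r < ε :=
  displacement_lt_of_dispersion_lt_arcsin_general r ε hr S hS hdisp
end
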